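/- Under Assumptions MD and SCD*, a set of pairwise distinct bundles S = {b_1,…,b_m} ⊆ B is a minimal optimal menu if and only if both of the following hold: (i) for every t ∈ T there exists i ∈ {1,…,m} with φ(b_i,t) = max_{b∈B} φ(b,t); and (ii) there exists a bijection ρ of {1,…,m} such that φ(b_{ρ(1)},t0) < φ(b_{ρ(2)},t0) < ⋯ < φ(b_{ρ(m)},t0), φ(b_{ρ(1)},t1) > φ(b_{ρ(2)},t1) > ⋯ > φ(b_{ρ(m)},t1), and for every i ∈ {2,…,m−1}: (φ(b_{ρ(i−1)},t1) − φ(b_{ρ(i)},t1))/(φ(b_{ρ(i)},t1) − φ(b_{ρ(i+1)},t1)) < (φ(b_{ρ(i−1)},t0) − φ(b_{ρ(i)},t0))/(φ(b_{ρ(i)},t0) − φ(b_{ρ(i+1)},t0)). -/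

import Mathlib

/-!
A menu is minimal optimal exactly when it is optimal and each of its bundles is the strict best in
the menu at some type. Under MD two such bundles swap their order between `t0` and `t1`, so the
menu is listed increasingly at `t0` and decreasingly at `t1`. For a triple `b₁, b₂, b₃` so listed
there is a mixture of `b₁` and `b₃` whose gap to `b₂` takes the same value at `t0` and `t1`, a
value that is negative exactly when the ratio condition holds; by SCD* the gap has that sign on
all of `T`. So the ratio condition is necessary for `b₂` to be strictly best at some type, and it
keeps `b₂` from being weakly beaten by both `b₁` and `b₃` at any type.

Conversely, the ratio conditions on consecutive triples make the slopes of the polygon through the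
points `(φ(b, t0), φ(b, t1))` increase, which gives the ratio condition for every triple. If some
`b` of the menu were nowhere the strict best, connectedness of `T` would give a type at which `b`
is weakly beaten both by an earlier and by a later bundle of the list.
-/

namespace Paper

abbrev Bundle (n : ℕ) := Finset (Fin n)

variable {n : ℕ}

/-- A stochastic bundle: nonnegative weights on bundles summing to one. -/
def IsStoch (a : Bundle n → ℝ) : Prop :=
  (∀ b, 0 ≤ a b) ∧ ∑ b, a b = 1

/-- The point mass at a bundle, viewed as a stochastic bundle. -/
def pt (b : Bundle n) : Bundle n → ℝ := fun b' => if b' = b then 1 else 0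

/-- Virtual value of a stochastic bundle (linear extension). -/
def phiA (φ : Bundle n → ℝ → ℝ) (a : Bundle n → ℝ) (t : ℝ) : ℝ :=
  ∑ b, a b * φ b t

/-- A function is single-crossing on a set: its sign is monotone there. -/
def SingleCrossingOn (g : ℝ → ℝ) (T : Set ℝ) : Prop :=
  MonotoneOn (fun t => Real.sign (g t)) T ∨ AntitoneOn (fun t => Real.sign (g t)) T

/-- Assumption SCD*: differences of virtual values of stochastic bundles are
single-crossing in the type. -/
def SCDstar (φ : Bundle n → ℝ → ℝ) (t0 t1 : ℝ) : Prop :=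
  ∀ a a' : Bundle n → ℝ, IsStoch a → IsStoch a' →
    SingleCrossingOn (fun t => phiA φ a t - phiA φ a' t) (Set.Icc t0 t1)

/-- Assumption MD: differences of virtual values of deterministic bundles are
monotone in the type. -/
def MD (φ : Bundle n → ℝ → ℝ) (t0 t1 : ℝ) : Prop :=
  ∀ b b' : Bundle n,
    MonotoneOn (fun t => φ b t - φ b' t) (Set.Icc t0 t1) ∨
    AntitoneOn (fun t => φ b t - φ b' t) (Set.Icc t0 t1)

/-- No two distinct bundles have identical virtual value functions on T. -/
def Distinct (φ : Bundle n → ℝ → ℝ) (t0 t1 : ℝ) : Prop :=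
  ∀ b b' : Bundle n, b ≠ b' → ∃ t ∈ Set.Icc t0 t1, φ b t ≠ φ b' t

/-- A stochastic bundle is very weakly dominated. -/
def VWD (φ : Bundle n → ℝ → ℝ) (t0 t1 : ℝ) (a : Bundle n → ℝ) : Prop :=
  ∃ a' : Bundle n → ℝ, IsStoch a' ∧ a' ≠ a ∧
    ∀ t ∈ Set.Icc t0 t1, phiA φ a t ≤ phiA φ a' t

/-- A bundle is a never strict best response. -/
def NeverStrictBR (φ : Bundle n → ℝ → ℝ) (t0 t1 : ℝ) (b : Bundle n) : Prop :=
  ∀ t ∈ Set.Icc t0 t1, ∃ b' : Bundle n, b' ≠ b ∧ φ b t ≤ φ b' t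

/-- A menu is optimal if at every type some element attains the upper envelope. -/
def OptimalMenu (φ : Bundle n → ℝ → ℝ) (t0 t1 : ℝ) (S : Finset (Bundle n)) : Prop :=
  ∀ t ∈ Set.Icc t0 t1, ∃ b ∈ S, ∀ b' : Bundle n, φ b' t ≤ φ b t

/-- A minimal optimal menu. -/
def MinimalOptimalMenu (φ : Bundle n → ℝ → ℝ) (t0 t1 : ℝ) (S : Finset (Bundle n)) : Prop :=
  OptimalMenu φ t0 t1 S ∧ ∀ S' : Finset (Bundle n), S' ⊂ S → ¬ OptimalMenu φ t0 t1 S'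

/-- A nested menu: any two elements are comparable under set inclusion. -/
def IsNestedMenu (S : Finset (Bundle n)) : Prop :=
  ∀ b1 ∈ S, ∀ b2 ∈ S, b1 ⊆ b2 ∨ b2 ⊆ b1

/-- A tree menu: a nonempty root contained in every nonempty element, and two
incomparable elements. -/
def IsTreeMenu (S : Finset (Bundle n)) : Prop :=
  (∃ r ∈ S, r ≠ (∅ : Bundle n) ∧ ∀ b ∈ S, b ≠ (∅ : Bundle n) → r ⊆ b) ∧
  (∃ b1 ∈ S, ∃ b2 ∈ S, ¬ b1 ⊆ b2 ∧ ¬ b2 ⊆ b1)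

open Set

theorem _root_.Real.sign_eq_neg_one_iff {r : ℝ} : Real.sign r = -1 ↔ r < 0 := by
  refine ⟨fun h => ?_, Real.sign_of_neg⟩
  by_contra! hr
  rcases hr.eq_or_lt with rfl | hr
  · norm_num [Real.sign_zero] at h
  · norm_num [Real.sign_of_pos hr] at h

theorem SingleCrossingOn.neg_iff_of_eq {g : ℝ → ℝ} {t0 t1 t : ℝ}
    (hg : SingleCrossingOn g (Icc t0 t1)) (hg01 : g t0 = g t1) (ht : t ∈ Icc t0 t1) :
    g t < 0 ↔ g t0 < 0 := by
  have h0 : t0 ∈ Icc t0 t1 := ⟨le_rfl, ht.1.trans ht.2⟩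
  have h1 : t1 ∈ Icc t0 t1 := ⟨ht.1.trans ht.2, le_rfl⟩
  have hsign : Real.sign (g t) = Real.sign (g t0) := by
    rcases hg with hm | hm
    · exact le_antisymm (hg01 ▸ hm ht h1 ht.2) (hm h0 ht ht.1)
    · exact le_antisymm (hm h0 ht ht.1) (hg01 ▸ hm ht h1 ht.2)
  rw [← Real.sign_eq_neg_one_iff, hsign, Real.sign_eq_neg_one_iff]

theorem _root_.Finset.exists_enum_strictMono {α β : Type*} [Nonempty α] [LinearOrder β]
    (S : Finset α) {f : α → β} (hf : InjOn f S) :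
    ∃ g : ℕ → α, (∀ i, i < S.card → g i ∈ S) ∧ (∀ b ∈ S, ∃ i, i < S.card ∧ g i = b) ∧
      ∀ i j, i < j → j < S.card → f (g i) < f (g j) := by
  classical
  have hcard : (S.image f).card = S.card := Finset.card_image_of_injOn hf
  set e := (S.image f).orderEmbOfFin hcard
  have he : ∀ i, ∃ b ∈ S, f b = e i := fun i =>
    Finset.mem_image.1 ((S.image f).orderEmbOfFin_mem hcard i)
  let g : ℕ → α := fun i =>
    if h : i < S.card then Function.invFunOn f S (e ⟨i, h⟩) else Classical.arbitrary α
  have hg : ∀ i (h : i < S.card), g i ∈ S ∧ f (g i) = e ⟨i, h⟩ := fun i h => by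
    simp only [g, dif_pos h]
    exact ⟨Function.invFunOn_mem (he _), Function.invFunOn_eq (he _)⟩
  refine ⟨g, fun i h => (hg i h).1, fun b hb => ?_, fun i j hij hj => ?_⟩
  · obtain ⟨i, hi⟩ : f b ∈ range e := by
      rw [Finset.range_orderEmbOfFin]
      exact Finset.mem_coe.2 (Finset.mem_image_of_mem f hb)
    exact ⟨i, i.2, hf (hg i i.2).1 hb (by rw [(hg i i.2).2, hi])⟩
  · rw [(hg i (hij.trans hj)).2, (hg j hj).2]
    exact e.strictMono (Fin.mk_lt_mk.2 hij)

theorem ratio_lt_iff_slope_lt {x1 x2 x3 y1 y2 y3 : ℝ} (hx12 : x1 < x2) (hx23 : x2 < x3)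
    (hy23 : y3 < y2) :
    (y1 - y2) / (y2 - y3) < (x1 - x2) / (x2 - x3) ↔
      (y1 - y2) / (x2 - x1) < (y2 - y3) / (x3 - x2) := by
  rw [← neg_div_neg_eq (x1 - x2), neg_sub, neg_sub, div_lt_div_iff₀ (by linarith) (by linarith),
    div_lt_div_iff₀ (by linarith) (by linarith)]
  constructor <;> intro h <;> linarith

theorem sub_le_mul_sub_of_forall_le {x y : ℕ → ℝ} {c : ℝ} {j i : ℕ} (hji : j ≤ i)
    (h : ∀ p, j ≤ p → p < i → y p - y (p + 1) ≤ c * (x (p + 1) - x p)) :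
    y j - y i ≤ c * (x i - x j) := by
  induction i, hji using Nat.le_induction with
  | base => simp
  | succ i hji ih =>
    have := h i hji i.lt_succ_self
    nlinarith [ih fun p hjp hpi => h p hjp (hpi.trans i.lt_succ_self)]

theorem mul_sub_le_sub_of_forall_le {x y : ℕ → ℝ} {c : ℝ} {i k : ℕ} (hik : i ≤ k)
    (h : ∀ p, i ≤ p → p < k → c * (x (p + 1) - x p) ≤ y p - y (p + 1)) :
    c * (x k - x i) ≤ y i - y k := by
  have := sub_le_mul_sub_of_forall_le (x := x) (y := -y) (c := -c) hik fun p hip hpk => by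
    simp only [Pi.neg_apply]; linarith [h p hip hpk]
  simp only [Pi.neg_apply] at this
  linarith

theorem ratio_lt_of_consecutive {x y : ℕ → ℝ} {m : ℕ}
    (hord : ∀ i j, i < j → j < m → x i < x j ∧ y j < y i)
    (hratio : ∀ i, 1 ≤ i → i + 1 < m →
      (y (i - 1) - y i) / (y i - y (i + 1)) < (x (i - 1) - x i) / (x i - x (i + 1)))
    {j i k : ℕ} (hji : j < i) (hik : i < k) (hk : k < m) :
    (y j - y i) / (y i - y k) < (x j - x i) / (x i - x k) := by
  let s : ℕ → ℝ := fun p => (y p - y (p + 1)) / (x (p + 1) - x p)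
  have hdx : ∀ p, p + 1 < m → 0 < x (p + 1) - x p := fun p hp =>
    sub_pos.2 (hord p (p + 1) p.lt_succ_self hp).1
  have hs : StrictMonoOn s (Iic (m - 2)) := strictMonoOn_Iic_of_lt_succ fun p hp => by
    have h := hratio (p + 1) (by omega) (by omega)
    rw [Nat.add_sub_cancel, ratio_lt_iff_slope_lt (hord p (p + 1) (by omega) (by omega)).1
      (hord (p + 1) (p + 2) (by omega) (by omega)).1
      (hord (p + 1) (p + 2) (by omega) (by omega)).2] at h
    exact h
  have hstep : ∀ p, p + 1 < m → y p - y (p + 1) = s p * (x (p + 1) - x p) := fun p hp =>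
    (div_mul_cancel₀ _ (hdx p hp).ne').symm
  have hleft : y j - y i ≤ s (i - 1) * (x i - x j) :=
    sub_le_mul_sub_of_forall_le hji.le fun p hjp hpi => by
      rw [hstep p (by omega)]
      gcongr
      · exact (hdx p (by omega)).le
      · exact hs.monotoneOn (mem_Iic.2 (by omega)) (mem_Iic.2 (by omega)) (by omega)
  have hright : s i * (x k - x i) ≤ y i - y k :=
    mul_sub_le_sub_of_forall_le hik.le fun p hip hpk => by
      rw [hstep p (by omega)]
      gcongr
      · exact (hdx p (by omega)).le
      · exact hs.monotoneOn (mem_Iic.2 (by omega)) (mem_Iic.2 (by omega)) hip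
  have hji' := hord j i hji (hik.trans hk)
  have hik' := hord i k hik hk
  rw [ratio_lt_iff_slope_lt hji'.1 hik'.1 hik'.2]
  calc (y j - y i) / (x i - x j) ≤ s (i - 1) := (div_le_iff₀ (by linarith)).2 hleft
    _ < s i := hs (mem_Iic.2 (by omega)) (mem_Iic.2 (by omega)) (by omega)
    _ ≤ (y i - y k) / (x k - x i) := (le_div_iff₀ (by linarith)).2 hright

theorem phiA_pt (φ : Bundle n → ℝ → ℝ) (b : Bundle n) (t : ℝ) : phiA φ (pt b) t = φ b t := by
  simp [phiA, pt]

theorem isStoch_pt (b : Bundle n) : IsStoch (pt b) :=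
  ⟨fun b' => by unfold pt; split_ifs <;> norm_num, by simp [pt]⟩

def mix (l : ℝ) (b b' : Bundle n) : Bundle n → ℝ :=
  fun c => l * pt b c + (1 - l) * pt b' c

theorem isStoch_mix {l : ℝ} (h0 : 0 ≤ l) (h1 : l ≤ 1) (b b' : Bundle n) :
    IsStoch (mix l b b') := by
  refine ⟨fun c => ?_, ?_⟩
  · exact add_nonneg (mul_nonneg h0 ((isStoch_pt b).1 c))
      (mul_nonneg (sub_nonneg.2 h1) ((isStoch_pt b').1 c))
  · simp [mix, Finset.sum_add_distrib, ← Finset.mul_sum, (isStoch_pt _).2]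

theorem phiA_mix (φ : Bundle n → ℝ → ℝ) (l : ℝ) (b b' : Bundle n) (t : ℝ) :
    phiA φ (mix l b b') t = l * φ b t + (1 - l) * φ b' t := by
  simp [phiA, mix, pt, add_mul, Finset.sum_add_distrib]

section Bundles

variable {φ : Bundle n → ℝ → ℝ} {t0 t1 : ℝ}

theorem SCDstar.singleCrossingOn_mix (hscd : SCDstar φ t0 t1) {l : ℝ} (h0 : 0 ≤ l) (h1 : l ≤ 1)
    (b1 b2 b3 : Bundle n) :
    SingleCrossingOn (fun t => l * (φ b1 t - φ b2 t) + (1 - l) * (φ b3 t - φ b2 t))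
      (Icc t0 t1) := by
  convert hscd _ _ (isStoch_mix h0 h1 b1 b3) (isStoch_pt b2) using 3 with t
  rw [phiA_mix, phiA_pt]
  ring

theorem SCDstar.exists_mix_neg_iff (hscd : SCDstar φ t0 t1) {b1 b2 b3 : Bundle n}
    (h12 : φ b1 t0 < φ b2 t0 ∧ φ b2 t1 < φ b1 t1) (h23 : φ b2 t0 < φ b3 t0 ∧ φ b3 t1 < φ b2 t1) :
    ∃ l ∈ Icc (0 : ℝ) 1, ∀ t ∈ Icc t0 t1,
      (l * (φ b1 t - φ b2 t) + (1 - l) * (φ b3 t - φ b2 t) < 0 ↔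
        (φ b1 t1 - φ b2 t1) / (φ b2 t1 - φ b3 t1) < (φ b1 t0 - φ b2 t0) / (φ b2 t0 - φ b3 t0)) := by
  set p := (φ b3 t0 - φ b2 t0) - (φ b3 t1 - φ b2 t1)
  set q := (φ b1 t1 - φ b2 t1) - (φ b1 t0 - φ b2 t0)
  have hp : 0 < p := by linarith
  have hq : 0 < q := by linarith
  have hl : p / (p + q) ∈ Icc (0 : ℝ) 1 :=
    ⟨by positivity, div_le_one_of_le₀ (by linarith) (by positivity)⟩
  refine ⟨p / (p + q), hl, fun t ht => ?_⟩
  have hgap : ∀ s ∈ ({t0, t1} : Set ℝ),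
      p / (p + q) * (φ b1 s - φ b2 s) + (1 - p / (p + q)) * (φ b3 s - φ b2 s) =
        ((φ b1 t1 - φ b2 t1) * (φ b3 t0 - φ b2 t0) - (φ b1 t0 - φ b2 t0) * (φ b3 t1 - φ b2 t1)) /
          (p + q) := by
    rintro s (rfl | rfl) <;> field_simp <;> ring
  rw [(hscd.singleCrossingOn_mix hl.1 hl.2 b1 b2 b3).neg_iff_of_eq
    ((hgap t0 (by simp)).trans (hgap t1 (by simp)).symm) ht, hgap t0 (by simp),
    div_lt_iff₀ (by positivity), zero_mul, ← neg_div_neg_eq (φ b1 t0 - φ b2 t0),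
    div_lt_div_iff₀ (by linarith) (by linarith), sub_neg]
  constructor <;> intro h <;> linarith

theorem MD.lt_and_lt_or_lt_and_lt (hmd : MD φ t0 t1) {b b' : Bundle n} {s s' : ℝ}
    (hs : s ∈ Icc t0 t1) (hs' : s' ∈ Icc t0 t1) (hb : φ b' s < φ b s) (hb' : φ b s' < φ b' s') :
    (φ b t0 < φ b' t0 ∧ φ b' t1 < φ b t1) ∨ (φ b' t0 < φ b t0 ∧ φ b t1 < φ b' t1) := by
  have h0 : t0 ∈ Icc t0 t1 := ⟨le_rfl, hs.1.trans hs.2⟩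
  have h1 : t1 ∈ Icc t0 t1 := ⟨hs.1.trans hs.2, le_rfl⟩
  rcases hmd b b' with hm | hm
  · have := hm h0 hs' hs'.1
    have := hm hs h1 hs.2
    dsimp only at *
    exact Or.inl ⟨by linarith, by linarith⟩
  · have := hm h0 hs hs.1
    have := hm hs' h1 hs'.2
    dsimp only at *
    exact Or.inr ⟨by linarith, by linarith⟩

theorem minimalOptimalMenu_iff {S : Finset (Bundle n)} :
    MinimalOptimalMenu φ t0 t1 S ↔ OptimalMenu φ t0 t1 S ∧
      ∀ b ∈ S, ∃ t ∈ Icc t0 t1, ∀ b' ∈ S, b' ≠ b → φ b' t < φ b t := by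
  classical
  refine and_congr_right fun hopt => ⟨fun hmin b hb => ?_, fun hbest S' hS' hopt' => ?_⟩
  · obtain ⟨t, ht, hbeaten⟩ : ∃ t ∈ Icc t0 t1, ∀ c ∈ S.erase b, ∃ b', φ c t < φ b' t := by
      simpa [OptimalMenu, and_assoc] using hmin _ (Finset.erase_ssubset hb)
    obtain ⟨c, hc, hcmax⟩ := hopt t ht
    obtain rfl : c = b := by
      by_contra hcb
      obtain ⟨b', hb'⟩ := hbeaten c (Finset.mem_erase.2 ⟨hcb, hc⟩)
      exact (hcmax b').not_gt hb'
    refine ⟨t, ht, fun b' hb' hne => ?_⟩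
    obtain ⟨b'', hb''⟩ := hbeaten b' (Finset.mem_erase.2 ⟨hne, hb'⟩)
    exact hb''.trans_le (hcmax b'')
  · obtain ⟨b, hbS, hbS'⟩ := Finset.exists_of_ssubset hS'
    obtain ⟨t, ht, hwin⟩ := hbest b hbS
    obtain ⟨c, hc, hcmax⟩ := hopt' t ht
    exact (hwin c (hS'.subset hc) (by rintro rfl; exact hbS' hc)).not_ge (hcmax b)

theorem exists_enum_of_forall_strictBest (hmd : MD φ t0 t1) (hscd : SCDstar φ t0 t1)
    {S : Finset (Bundle n)}
    (hbest : ∀ b ∈ S, ∃ t ∈ Icc t0 t1, ∀ b' ∈ S, b' ≠ b → φ b' t < φ b t) :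
    ∃ g : ℕ → Bundle n,
      (∀ i, i < S.card → g i ∈ S) ∧
      (∀ b ∈ S, ∃ i, i < S.card ∧ g i = b) ∧
      (∀ i j, i < j → j < S.card → φ (g i) t0 < φ (g j) t0 ∧ φ (g j) t1 < φ (g i) t1) ∧
      (∀ i, 1 ≤ i → i + 1 < S.card →
        (φ (g (i - 1)) t1 - φ (g i) t1) / (φ (g i) t1 - φ (g (i + 1)) t1) <
          (φ (g (i - 1)) t0 - φ (g i) t0) / (φ (g i) t0 - φ (g (i + 1)) t0)) := by
  have hsep : ∀ b ∈ S, ∀ b' ∈ S, b ≠ b' →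
      (φ b t0 < φ b' t0 ∧ φ b' t1 < φ b t1) ∨ (φ b' t0 < φ b t0 ∧ φ b t1 < φ b' t1) := by
    intro b hb b' hb' hne
    obtain ⟨s, hs, hwin⟩ := hbest b hb
    obtain ⟨s', hs', hwin'⟩ := hbest b' hb'
    exact hmd.lt_and_lt_or_lt_and_lt hs hs' (hwin b' hb' hne.symm) (hwin' b hb hne)
  have hinj : InjOn (φ · t0) S := fun b hb b' hb' heq => by
    by_contra hne
    rcases hsep b hb b' hb' hne with h | h <;> simp only at heq <;> linarith [h.1]
  obtain ⟨g, hmem, hsurj, hmono⟩ := S.exists_enum_strictMono hinj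
  have hord : ∀ i j, i < j → j < S.card → φ (g i) t0 < φ (g j) t0 ∧ φ (g j) t1 < φ (g i) t1 := by
    intro i j hij hj
    have h0 := hmono i j hij hj
    rcases hsep _ (hmem i (hij.trans hj)) _ (hmem j hj) (fun h => h0.ne (by rw [h])) with h | h
    · exact h
    · exact absurd h.1 h0.not_gt
  refine ⟨g, hmem, hsurj, hord, fun i hi hi' => ?_⟩
  have hlo := hord (i - 1) i (by omega) (by omega)
  have hhi := hord i (i + 1) i.lt_succ_self hi'
  obtain ⟨t, ht, hwin⟩ := hbest (g i) (hmem i (by omega))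
  have h1 := hwin _ (hmem (i - 1) (by omega)) fun h => hlo.1.ne (by rw [h])
  have h3 := hwin _ (hmem (i + 1) hi') fun h => hhi.1.ne' (by rw [h])
  obtain ⟨l, hl, hiff⟩ := hscd.exists_mix_neg_iff hlo hhi
  refine (hiff t ht).1 ?_
  rcases le_total (φ (g (i - 1)) t) (φ (g (i + 1)) t) with h | h <;> nlinarith [hl.1, hl.2]

theorem forall_strictBest_of_enum (ht : t0 ≤ t1)
    (hcont : ∀ b : Bundle n, ContinuousOn (φ b) (Icc t0 t1)) (hscd : SCDstar φ t0 t1)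
    {S : Finset (Bundle n)} {g : ℕ → Bundle n}
    (hsurj : ∀ b ∈ S, ∃ i, i < S.card ∧ g i = b)
    (hord : ∀ i j, i < j → j < S.card → φ (g i) t0 < φ (g j) t0 ∧ φ (g j) t1 < φ (g i) t1)
    (hratio : ∀ i, 1 ≤ i → i + 1 < S.card →
      (φ (g (i - 1)) t1 - φ (g i) t1) / (φ (g i) t1 - φ (g (i + 1)) t1) <
        (φ (g (i - 1)) t0 - φ (g i) t0) / (φ (g i) t0 - φ (g (i + 1)) t0)) :
    ∀ b ∈ S, ∃ t ∈ Icc t0 t1, ∀ b' ∈ S, b' ≠ b → φ b' t < φ b t := by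
  intro b hb
  obtain ⟨i, hi, rfl⟩ := hsurj b hb
  by_contra! hno
  set U := ⋃ j ∈ Finset.range i, {t ∈ Icc t0 t1 | φ (g i) t ≤ φ (g j) t}
  set D := ⋃ k ∈ Finset.Ioo i S.card, {t ∈ Icc t0 t1 | φ (g i) t ≤ φ (g k) t}
  have hU : IsClosed U :=
    isClosed_biUnion_finset fun j _ => isClosed_Icc.isClosed_le (hcont _) (hcont _)
  have hD : IsClosed D :=
    isClosed_biUnion_finset fun k _ => isClosed_Icc.isClosed_le (hcont _) (hcont _)
  have hcover : Icc t0 t1 ⊆ U ∪ D := fun t htI => by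
    obtain ⟨b', hb', hne, hle⟩ := hno t htI
    obtain ⟨j, hj, rfl⟩ := hsurj b' hb'
    rcases lt_or_gt_of_ne (fun h : j = i => hne (h ▸ rfl)) with hji | hij
    · exact Or.inl (mem_biUnion (Finset.mem_range.2 hji) ⟨htI, hle⟩)
    · exact Or.inr (mem_biUnion (Finset.mem_Ioo.2 ⟨hij, hj⟩) ⟨htI, hle⟩)
  have h1 : t1 ∈ U := (hcover ⟨ht, le_rfl⟩).resolve_right fun h1 => by
    simp only [D, mem_iUnion, Finset.mem_Ioo] at h1
    obtain ⟨k, ⟨hik, hk⟩, -, hle⟩ := h1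
    exact (hord i k hik hk).2.not_ge hle
  have h0 : t0 ∈ D := (hcover ⟨le_rfl, ht⟩).resolve_left fun h0 => by
    simp only [U, mem_iUnion, Finset.mem_range] at h0
    obtain ⟨j, hji, -, hle⟩ := h0
    exact (hord j i hji hi).1.not_ge hle
  obtain ⟨t, htI, htU, htD⟩ :=
    isPreconnected_closed_iff.1 isPreconnected_Icc U D hU hD hcover ⟨t1, ⟨ht, le_rfl⟩, h1⟩
      ⟨t0, ⟨le_rfl, ht⟩, h0⟩
  simp only [U, D, mem_iUnion, Finset.mem_range, Finset.mem_Ioo] at htU htD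
  obtain ⟨j, hji, -, hj⟩ := htU
  obtain ⟨k, ⟨hik, hk⟩, -, hk'⟩ := htD
  obtain ⟨l, hl, hiff⟩ := hscd.exists_mix_neg_iff (hord j i hji hi) (hord i k hik hk)
  have hneg := (hiff t htI).2 <| ratio_lt_of_consecutive (x := fun i => φ (g i) t0)
    (y := fun i => φ (g i) t1) hord hratio hji hik hk
  nlinarith [mul_nonneg hl.1 (sub_nonneg.2 hj), mul_nonneg (sub_nonneg.2 hl.2) (sub_nonneg.2 hk')]

end Bundles

theorem stmt7_general {n : ℕ} (t0 t1 : ℝ) (ht : t0 < t1)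
    (φ : Bundle n → ℝ → ℝ)
    (hcont : ∀ b : Bundle n, ContinuousOn (φ b) (Set.Icc t0 t1))
    (hmd : MD φ t0 t1)
    (hscd : SCDstar φ t0 t1)
    (S : Finset (Bundle n)) :
    MinimalOptimalMenu φ t0 t1 S ↔
      ((∀ t ∈ Set.Icc t0 t1, ∃ b ∈ S, ∀ b' : Bundle n, φ b' t ≤ φ b t) ∧
       ∃ g : ℕ → Bundle n,
         (∀ i, i < S.card → g i ∈ S) ∧
         (∀ b ∈ S, ∃ i, i < S.card ∧ g i = b) ∧
         (∀ i j, i < j → j < S.card →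
            φ (g i) t0 < φ (g j) t0 ∧ φ (g j) t1 < φ (g i) t1) ∧
         (∀ i, 1 ≤ i → i + 1 < S.card →
            (φ (g (i - 1)) t1 - φ (g i) t1) / (φ (g i) t1 - φ (g (i + 1)) t1) <
              (φ (g (i - 1)) t0 - φ (g i) t0) / (φ (g i) t0 - φ (g (i + 1)) t0))) := by
  rw [minimalOptimalMenu_iff]
  refine and_congr Iff.rfl ⟨exists_enum_of_forall_strictBest hmd hscd, ?_⟩
  rintro ⟨g, -, hsurj, hord, hratio⟩
  exact forall_strictBest_of_enum ht.le hcont hscd hsurj hord hratio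

/-- **Corollary 7.** Under Assumptions MD and SCD*, a menu S is the minimal optimal
menu iff (i) S attains the upper envelope at every type, and (ii) S can be enumerated
so that virtual values at t0 are strictly increasing, virtual values at t1 are strictly
decreasing, and every interior triple satisfies the strict ratio condition. -/
theorem stmt7 {n : ℕ} (hn : 1 ≤ n) (t0 t1 : ℝ) (ht : t0 < t1)
    (φ : Bundle n → ℝ → ℝ)
    (hcont : ∀ b : Bundle n, ContinuousOn (φ b) (Set.Icc t0 t1))
    (hdist : Distinct φ t0 t1)
    (hmd : MD φ t0 t1)
    (hscd : SCDstar φ t0 t1)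
    (S : Finset (Bundle n)) :
    MinimalOptimalMenu φ t0 t1 S ↔
      ((∀ t ∈ Set.Icc t0 t1, ∃ b ∈ S, ∀ b' : Bundle n, φ b' t ≤ φ b t) ∧
       ∃ g : ℕ → Bundle n,
         (∀ i, i < S.card → g i ∈ S) ∧
         (∀ b ∈ S, ∃ i, i < S.card ∧ g i = b) ∧
         (∀ i j, i < j → j < S.card →
            φ (g i) t0 < φ (g j) t0 ∧ φ (g j) t1 < φ (g i) t1) ∧
         (∀ i, 1 ≤ i → i + 1 < S.card →
            (φ (g (i - 1)) t1 - φ (g i) t1) / (φ (g i) t1 - φ (g (i + 1)) t1) <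
              (φ (g (i - 1)) t0 - φ (g i) t0) / (φ (g i) t0 - φ (g (i + 1)) t0))) :=
  stmt7_general t0 t1 ht φ hcont hmd hscd S

end Paper
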